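/- The set {(x, y) ∈ ℚ × ℚ : y² + y = x³ − x} is infinite; that is, the elliptic curve y² + y = x³ − x has infinitely many rational solutions (rank 1). -/

import Mathlib

open WeierstrassCurve.Affine

private def myW : WeierstrassCurve.Affine ℚ :=
  { a₁ := 0, a₂ := 0, a₃ := 1, a₄ := -1, a₆ := 0 }

private lemma myW_a₁ : myW.a₁ = 0 := rfl
private lemma myW_a₂ : myW.a₂ = 0 := rfl
private lemma myW_a₃ : myW.a₃ = 1 := rfl
private lemma myW_a₄ : myW.a₄ = -1 := rfl
private lemma myW_a₆ : myW.a₆ = 0 := rfl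

private lemma myW_equation (x y : ℚ) : myW.Equation x y ↔ y ^ 2 + y = x ^ 3 - x := by
  rw [equation_iff, myW_a₁, myW_a₂, myW_a₃, myW_a₄, myW_a₆]
  constructor <;> intro h <;> linarith

private lemma val_add {q r : ℚ} (hq : q ≠ 0) (hr : r ≠ 0)
    (h : padicValRat 2 q < padicValRat 2 r) :
    q + r ≠ 0 ∧ padicValRat 2 (q + r) = padicValRat 2 q := by
  have hqr : q + r ≠ 0 := by
    intro h0
    have hrq : r = -q := by linarith [eq_neg_of_add_eq_zero_right h0]
    rw [hrq, padicValRat.neg] at h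
    exact lt_irrefl _ h
  exact ⟨hqr, padicValRat.add_eq_of_lt hqr hq hr h⟩

private lemma val_three : padicValRat 2 (3 : ℚ) = 0 := by
  have : ((3 : ℤ) : ℚ) = (3 : ℚ) := by norm_num
  rw [← this, padicValRat.of_int]
  exact_mod_cast padicValInt.eq_zero_of_not_dvd (p := 2) (z := 3) (by decide)

private lemma step {x y : ℚ} (k : ℤ) (hk : 1 ≤ k) (hE : y ^ 2 + y = x ^ 3 - x)
    (hv : padicValRat 2 x = -(2 * k)) :
    ∃ x' y' : ℚ, (y' ^ 2 + y' = x' ^ 3 - x') ∧ padicValRat 2 x' = -(2 * (k + 1)) := by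
  have hx0 : x ≠ 0 := by
    intro h; rw [h, padicValRat.zero] at hv; omega
  -- valuation of x^3 - x
  have vx3 : padicValRat 2 (x ^ 3) = -(6 * k) := by
    rw [padicValRat.pow x, hv]; push_cast; ring
  have vnx : padicValRat 2 (-x) = -(2 * k) := by rw [padicValRat.neg, hv]
  obtain ⟨hc0, hcv⟩ := val_add (pow_ne_zero 3 hx0) (neg_ne_zero.mpr hx0)
    (by rw [vx3, vnx]; omega)
  rw [← sub_eq_add_neg] at hc0 hcv
  rw [vx3] at hcv
  -- y and y+1 nonzero
  have hyy : y * (y + 1) = x ^ 3 - x := by linear_combination hE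
  have hy0 : y ≠ 0 := by rintro rfl; simp at hyy; exact hc0 hyy.symm
  have hy1 : y + 1 ≠ 0 := by
    intro h; rw [h, mul_zero] at hyy; exact hc0 hyy.symm
  -- valuation of y
  have hvmul : padicValRat 2 y + padicValRat 2 (y + 1) = -(6 * k) := by
    rw [← padicValRat.mul hy0 hy1, hyy, hcv]
  have hvy_neg : padicValRat 2 y < 0 := by
    by_contra hcon
    push_neg at hcon
    have h1 : min (padicValRat 2 y) (padicValRat 2 (1 : ℚ)) ≤ padicValRat 2 (y + 1) :=
      padicValRat.min_le_padicValRat_add hy1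
    rw [padicValRat.one] at h1
    omega
  have hvy1 : padicValRat 2 (y + 1) = padicValRat 2 y := by
    have := val_add hy0 one_ne_zero (by rw [padicValRat.one]; exact hvy_neg)
    exact this.2
  have hvy : padicValRat 2 y = -(3 * k) := by omega
  -- valuation of d = 2y+1
  have h2y0 : (2 : ℚ) * y ≠ 0 := by positivity
  have v2 : padicValRat 2 (2 : ℚ) = 1 := by
    simpa using padicValRat.self (p := 2) (by norm_num)
  have hv2y : padicValRat 2 (2 * y) = 1 - 3 * k := by
    rw [padicValRat.mul two_ne_zero hy0, hvy, v2]; ring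
  obtain ⟨hd0, hdv⟩ := val_add h2y0 one_ne_zero
    (by rw [hv2y, padicValRat.one]; omega)
  rw [hv2y] at hdv
  -- valuation of n = 3x^2 - 1
  have h3x0 : (3 : ℚ) * x ^ 2 ≠ 0 := by positivity
  have hv3x : padicValRat 2 (3 * x ^ 2) = -(4 * k) := by
    rw [padicValRat.mul three_ne_zero (pow_ne_zero 2 hx0), padicValRat.pow x, hv, val_three]
    push_cast; ring
  obtain ⟨hn0, hnv⟩ := val_add h3x0 (neg_ne_zero.mpr one_ne_zero)
    (by rw [hv3x, padicValRat.neg, padicValRat.one]; omega)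
  rw [← sub_eq_add_neg] at hn0 hnv
  rw [hv3x] at hnv
  -- slope
  set l : ℚ := (3 * x ^ 2 - 1) / (2 * y + 1) with hl
  have hl0 : l ≠ 0 := div_ne_zero hn0 hd0
  have hvl : padicValRat 2 l = -(k + 1) := by
    rw [hl, padicValRat.div hn0 hd0, hnv, hdv]; ring
  -- x' = l^2 - 2x
  have hvl2 : padicValRat 2 (l ^ 2) = -(2 * k + 2) := by
    rw [padicValRat.pow l, hvl]; push_cast; ring
  have h2x0 : -((2 : ℚ) * x) ≠ 0 := neg_ne_zero.mpr (mul_ne_zero two_ne_zero hx0)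
  have hv2x : padicValRat 2 (-(2 * x)) = 1 - 2 * k := by
    rw [padicValRat.neg, padicValRat.mul two_ne_zero hx0, hv, v2]; ring
  obtain ⟨hx'0, hx'v⟩ := val_add (pow_ne_zero 2 hl0) h2x0 (by rw [hvl2, hv2x]; omega)
  rw [← sub_eq_add_neg] at hx'0 hx'v
  rw [hvl2] at hx'v
  -- the curve equation via Mathlib's group law
  have hEW : myW.Equation x y := (myW_equation x y).mpr hE
  have hy_ne : y ≠ myW.negY x y := by
    rw [negY, myW_a₁, myW_a₃]
    intro h
    apply hd0
    linarith [h]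
  have hslope : myW.slope x x y y = l := by
    rw [slope_of_Y_ne rfl hy_ne, negY, myW_a₁, myW_a₂, myW_a₃, myW_a₄, hl]
    ring_nf
  have hadd := equation_add hEW hEW (fun h => hy_ne h.2)
  rw [hslope] at hadd
  have haddX : myW.addX x x l = l ^ 2 - 2 * x := by
    rw [addX, myW_a₁, myW_a₂]; ring
  refine ⟨l ^ 2 - 2 * x, myW.addY x x y l, ?_, ?_⟩
  · have := (myW_equation _ _).mp hadd
    rwa [haddX] at this
  · rw [hx'v]; ring

private lemma exists_point (k : ℕ) :
    ∃ p : ℚ × ℚ, (p.2 ^ 2 + p.2 = p.1 ^ 3 - p.1) ∧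
      padicValRat 2 p.1 = -(2 * ((k : ℤ) + 1)) := by
  induction k with
  | zero =>
    refine ⟨(1/4, -5/8), by norm_num, ?_⟩
    have h14 : (1 / 4 : ℚ) = (((2 : ℕ) : ℚ) ^ 2)⁻¹ := by norm_num
    simp only
    rw [h14, padicValRat.self_pow_inv]
    norm_num
  | succ n ih =>
    obtain ⟨⟨x, y⟩, hE, hv⟩ := ih
    obtain ⟨x', y', hE', hv'⟩ := step ((n : ℤ) + 1) (by omega) hE hv
    exact ⟨(x', y'), hE', by rw [hv']; push_cast; ring⟩

/-- The elliptic curve `y² + y = x³ − x` has infinitely many rational solutions. -/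
theorem infinitely_many_rational_points :
    {p : ℚ × ℚ | p.2 ^ 2 + p.2 = p.1 ^ 3 - p.1}.Infinite := by
  apply Set.infinite_of_injective_forall_mem
    (f := fun k : ℕ => (exists_point k).choose)
  · intro a b hab
    simp only at hab
    have ha := (exists_point a).choose_spec.2
    have hb := (exists_point b).choose_spec.2
    rw [hab, hb] at ha
    omega
  · intro a
    exact (exists_point a).choose_spec.1
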